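/- Let A ⊆ 2^[n] and B = Δ_{i,j}(A) for distinct i, j ∈ [n]. Then |A*| ≤ |B*|, where F* denotes the family of sets in F intersecting every member of F. -/

import Mathlib

/-!
`Δ_{i,j}` is the UV-compression along `u = {i}`, `v = {j}`, so it preserves cardinality, and it
suffices to show `Δ_{i,j}(𝒜*) ⊆ (Δ_{i,j} 𝒜)*`. Each intersection to be checked there either
contains `i` or reduces to one in `𝒜` by trading the shift from one set to the other: if `j ∈ C`,
`i ∉ C` and `Δ A` meets `C`, then `A` meets `Δ C`.
-/

open Finset

variable {n : ℕ}

def delta {α : Type*} [DecidableEq α] (i j : α) (A : Finset α) : Finset α :=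
  if j ∈ A ∧ i ∉ A then insert i (A.erase j) else A

def compFam {α : Type*} [DecidableEq α] (i j : α) (𝒜 : Finset (Finset α)) :
    Finset (Finset α) :=
  𝒜.filter (fun A => delta i j A ∈ 𝒜) ∪
    (𝒜.filter (fun A => delta i j A ∉ 𝒜)).image (delta i j)

/-- `𝒜* `: the members of `𝒜` intersecting every member of `𝒜`. -/
def starPart {α : Type*} [DecidableEq α] (𝒜 : Finset (Finset α)) :
    Finset (Finset α) :=
  𝒜.filter (fun A => ∀ B ∈ 𝒜, (A ∩ B).Nonempty)

section

variable {α : Type*} [DecidableEq α] {i j : α} {A B C : Finset α} {𝒜 : Finset (Finset α)}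

open UV FinsetFamily

theorem delta_eq_compress (i j : α) : delta i j = compress {i} {j} := by
  funext A
  unfold delta compress
  simp only [disjoint_singleton_left, singleton_subset_iff, and_comm]
  split_ifs with h
  · ext x
    simp only [mem_insert, mem_erase, sup_eq_union, mem_sdiff, mem_union, mem_singleton]
    grind
  · rfl

theorem compFam_eq_compression (i j : α) (𝒜 : Finset (Finset α)) :
    compFam i j 𝒜 = 𝓒 {i} {j} 𝒜 := by
  ext B
  simp only [compFam, mem_compression, mem_union, mem_filter, mem_image, ← delta_eq_compress]
  grind

theorem card_compFam (i j : α) (𝒜 : Finset (Finset α)) : #(compFam i j 𝒜) = #𝒜 := by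
  rw [compFam_eq_compression, card_compression]

theorem delta_idem (i j : α) (A : Finset α) : delta i j (delta i j A) = delta i j A := by
  rw [delta_eq_compress, compress_idem]

theorem delta_eq_self (h : ¬(j ∈ A ∧ i ∉ A)) : delta i j A = A := if_neg h

theorem mem_delta (hj : j ∈ A) (hi : i ∉ A) {x : α} :
    x ∈ delta i j A ↔ x = i ∨ x ∈ A ∧ x ≠ j := by
  rw [delta, if_pos ⟨hj, hi⟩, mem_insert, mem_erase, and_comm]

theorem left_mem_delta (hj : j ∈ A) (hi : i ∉ A) : i ∈ delta i j A :=
  (mem_delta hj hi).2 (Or.inl rfl)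

theorem inter_delta_nonempty (hj : j ∈ C) (hi : i ∉ C) (h : (delta i j A ∩ C).Nonempty) :
    (A ∩ delta i j C).Nonempty := by
  obtain ⟨y, hy⟩ := h
  obtain ⟨hyA, hyC⟩ := mem_inter.1 hy
  by_cases hA : j ∈ A ∧ i ∉ A
  · obtain rfl | ⟨hyA, hyj⟩ := (mem_delta hA.1 hA.2).1 hyA
    · exact absurd hyC hi
    · exact ⟨y, mem_inter.2 ⟨hyA, (mem_delta hj hi).2 (Or.inr ⟨hyC, hyj⟩)⟩⟩
  · rw [delta_eq_self hA] at hyA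
    by_cases hyj : y = j
    · have hiA : i ∈ A := by subst hyj; tauto
      exact ⟨i, mem_inter.2 ⟨hiA, left_mem_delta hj hi⟩⟩
    · exact ⟨y, mem_inter.2 ⟨hyA, (mem_delta hj hi).2 (Or.inr ⟨hyC, hyj⟩)⟩⟩

theorem mem_starPart : A ∈ starPart 𝒜 ↔ A ∈ 𝒜 ∧ ∀ B ∈ 𝒜, (A ∩ B).Nonempty := mem_filter

theorem mem_compFam : B ∈ compFam i j 𝒜 ↔
    B ∈ 𝒜 ∧ delta i j B ∈ 𝒜 ∨ ∃ C ∈ 𝒜, delta i j C ∉ 𝒜 ∧ delta i j C = B := by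
  simp only [compFam, mem_union, mem_filter, mem_image, and_assoc]

theorem mem_and_not_mem_of_delta_not_mem (hA : A ∈ 𝒜) (h : delta i j A ∉ 𝒜) :
    j ∈ A ∧ i ∉ A := by
  by_contra hA'
  exact h (by rwa [delta_eq_self hA'])

theorem delta_mem_compFam (hA : A ∈ 𝒜) : delta i j A ∈ compFam i j 𝒜 := by
  by_cases h : delta i j A ∈ 𝒜
  · exact mem_compFam.2 (Or.inl ⟨h, by rwa [delta_idem]⟩)
  · exact mem_compFam.2 (Or.inr ⟨A, hA, h, rfl⟩)

theorem mem_starPart_compFam_of_delta_mem (hA : A ∈ starPart 𝒜)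
    (hδA : delta i j A ∈ starPart 𝒜) : A ∈ starPart (compFam i j 𝒜) := by
  rw [mem_starPart] at hA hδA ⊢
  refine ⟨mem_compFam.2 (Or.inl ⟨hA.1, hδA.1⟩), fun B hB => ?_⟩
  obtain ⟨hB, -⟩ | ⟨C, hC, hδC, rfl⟩ := mem_compFam.1 hB
  · exact hA.2 B hB
  · obtain ⟨hj, hi⟩ := mem_and_not_mem_of_delta_not_mem hC hδC
    exact inter_delta_nonempty hj hi (hδA.2 C hC)

theorem delta_mem_starPart_compFam (hA : A ∈ starPart 𝒜) (hj : j ∈ A) (hi : i ∉ A) :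
    delta i j A ∈ starPart (compFam i j 𝒜) := by
  rw [mem_starPart] at hA ⊢
  refine ⟨delta_mem_compFam hA.1, fun B hB => ?_⟩
  obtain ⟨-, hδB⟩ | ⟨C, hC, hδC, rfl⟩ := mem_compFam.1 hB
  · rw [inter_comm]
    exact inter_delta_nonempty hj hi (by rw [inter_comm]; exact hA.2 _ hδB)
  · obtain ⟨hjC, hiC⟩ := mem_and_not_mem_of_delta_not_mem hC hδC
    exact ⟨i, mem_inter.2 ⟨left_mem_delta hj hi, left_mem_delta hjC hiC⟩⟩

theorem compFam_starPart_subset (i j : α) (𝒜 : Finset (Finset α)) :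
    compFam i j (starPart 𝒜) ⊆ starPart (compFam i j 𝒜) := by
  intro X hX
  obtain ⟨hA, hδA⟩ | ⟨A, hA, hδA, rfl⟩ := mem_compFam.1 hX
  · exact mem_starPart_compFam_of_delta_mem hA hδA
  · obtain ⟨hj, hi⟩ := mem_and_not_mem_of_delta_not_mem hA hδA
    exact delta_mem_starPart_compFam hA hj hi

end

theorem compression_star_card_le_general (i j : Fin n)
    (𝒜 : Finset (Finset (Fin n))) :
    (starPart 𝒜).card ≤ (starPart (compFam i j 𝒜)).card :=
  calc #(starPart 𝒜) = #(compFam i j (starPart 𝒜)) := (card_compFam i j _).symm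
    _ ≤ #(starPart (compFam i j 𝒜)) := card_le_card (compFam_starPart_subset i j 𝒜)

theorem compression_star_card_le (i j : Fin n) (hij : i ≠ j)
    (𝒜 : Finset (Finset (Fin n))) :
    (starPart 𝒜).card ≤ (starPart (compFam i j 𝒜)).card :=
  compression_star_card_le_general i j 𝒜
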